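/- For ℓ ∈ {0,1,…,7}, let W_ℓ be defined by W_ℓ(x) = 0 for x ∈ (−1, −1+ℓ/4), W_ℓ(x) = ½x² + (1−ℓ/4)x + ½(−1+ℓ/4)² for x ∈ [−1+ℓ/4, −1+(ℓ+1)/4), and W_ℓ(x) = ¼x + 7/32 − ℓ/16 for x ∈ [−1+(ℓ+1)/4, 1). Then lim_{x→1⁻} W_ℓ(x) = 15/32 − ℓ/16 = (15 − 2ℓ)/32. Consequently, for b ∈ ℝ^8, setting C₁ = ∑_{ℓ=0}^{7} b_ℓ·(15−2ℓ)/96 and C₂ = 2C₁, the function u(x,b) defined by u(x,b) = ∑_{ℓ=0}^{7} (−2b_ℓ)W_ℓ(x) + 2C₁x + C₂ for x ∈ (−1,0) and u(x,b) = ∑_{ℓ=0}^{7} (−b_ℓ)W_ℓ(x) + C₁x + C₂ for x ∈ [0,1) satisfies lim_{x→−1⁺} u(x,b) = 0 and lim_{x→1⁻} u(x,b) = 0. -/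
import Mathlib


open Set Filter Topology

/-- The second anti-derivative `W_ℓ` of the characteristic function
`𝟙_{[-1+ℓ/4, -1+(ℓ+1)/4]}`, defined piecewise on `(-1,1)`. -/
noncomputable def Wfun (l : ℕ) (x : ℝ) : ℝ :=
  if x < -1 + (l : ℝ) / 4 then 0
  else if x < -1 + ((l : ℝ) + 1) / 4 then
    x ^ 2 / 2 + (1 - (l : ℝ) / 4) * x + (-1 + (l : ℝ) / 4) ^ 2 / 2
  else x / 4 + 7 / 32 - (l : ℝ) / 16

lemma tendsto_W_one (l : ℕ) (hl : l ≤ 7) :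
    Tendsto (Wfun l) (𝓝[<] (1 : ℝ)) (𝓝 ((15 - 2 * (l : ℝ)) / 32)) := by
  have hmem : Ioo (3/4:ℝ) 1 ∈ 𝓝[<] (1:ℝ) := Ioo_mem_nhdsLT_of_mem (by norm_num)
  rcases eq_or_lt_of_le hl with h7 | h6
  · subst h7
    have heq : ∀ᶠ x in 𝓝[<] (1:ℝ), (fun x : ℝ =>
        x ^ 2 / 2 + (1 - (7:ℝ) / 4) * x + (-1 + (7:ℝ) / 4) ^ 2 / 2) x = Wfun 7 x := by
      filter_upwards [hmem] with x hx
      rcases hx with ⟨h1, h2⟩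
      rw [Wfun, if_neg (by push_cast; linarith), if_pos (by push_cast; linarith)]
      norm_num
    refine Tendsto.congr' heq ?_
    have hc : ContinuousAt (fun x : ℝ =>
        x ^ 2 / 2 + (1 - (7:ℝ) / 4) * x + (-1 + (7:ℝ) / 4) ^ 2 / 2) 1 := by fun_prop
    have h2 : Tendsto (fun x : ℝ =>
        x ^ 2 / 2 + (1 - (7:ℝ) / 4) * x + (-1 + (7:ℝ) / 4) ^ 2 / 2) (𝓝[<] (1:ℝ))
        (𝓝 ((1:ℝ) ^ 2 / 2 + (1 - (7:ℝ) / 4) * 1 + (-1 + (7:ℝ) / 4) ^ 2 / 2)) :=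
      hc.tendsto.mono_left nhdsWithin_le_nhds
    convert h2 using 2
    norm_num
  · have hl6 : (l : ℝ) ≤ 6 := by exact_mod_cast Nat.lt_succ_iff.mp h6
    have heq : ∀ᶠ x in 𝓝[<] (1:ℝ),
        (fun x : ℝ => x / 4 + 7 / 32 - (l:ℝ) / 16) x = Wfun l x := by
      filter_upwards [hmem] with x hx
      rcases hx with ⟨h1, h2⟩
      rw [Wfun, if_neg (by linarith), if_neg (by linarith)]
    refine Tendsto.congr' heq ?_
    have hc : ContinuousAt (fun x : ℝ => x / 4 + 7 / 32 - (l:ℝ) / 16) 1 := by fun_prop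
    have h2 : Tendsto (fun x : ℝ => x / 4 + 7 / 32 - (l:ℝ) / 16) (𝓝[<] (1:ℝ))
        (𝓝 ((1:ℝ) / 4 + 7 / 32 - (l:ℝ) / 16)) := hc.tendsto.mono_left nhdsWithin_le_nhds
    convert h2 using 2
    ring

lemma tendsto_W_negone (l : ℕ) :
    Tendsto (Wfun l) (𝓝[>] (-1 : ℝ)) (𝓝 0) := by
  have hmem : Ioo (-1:ℝ) (-3/4) ∈ 𝓝[>] (-1:ℝ) := Ioo_mem_nhdsGT_of_mem (by norm_num)
  rcases Nat.eq_zero_or_pos l with h0 | hpos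
  · subst h0
    have heq : ∀ᶠ x in 𝓝[>] (-1:ℝ), (fun x : ℝ =>
        x ^ 2 / 2 + x + 1 / 2) x = Wfun 0 x := by
      filter_upwards [hmem] with x hx
      rcases hx with ⟨h1, h2⟩
      rw [Wfun, if_neg (by push_cast; linarith), if_pos (by push_cast; linarith)]
      push_cast
      ring
    refine Tendsto.congr' heq ?_
    have hc : ContinuousAt (fun x : ℝ => x ^ 2 / 2 + x + 1 / 2) (-1) := by fun_prop
    have h2 : Tendsto (fun x : ℝ => x ^ 2 / 2 + x + 1 / 2) (𝓝[>] (-1:ℝ))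
        (𝓝 ((-1:ℝ) ^ 2 / 2 + (-1) + 1 / 2)) := hc.tendsto.mono_left nhdsWithin_le_nhds
    convert h2 using 2
    norm_num
  · have hl1 : (1:ℝ) ≤ (l:ℝ) := by exact_mod_cast hpos
    have heq : ∀ᶠ x in 𝓝[>] (-1:ℝ), (fun _ : ℝ => (0:ℝ)) x = Wfun l x := by
      filter_upwards [hmem] with x hx
      rcases hx with ⟨h1, h2⟩
      rw [Wfun, if_pos (by linarith)]
    exact Tendsto.congr' heq tendsto_const_nhds

/-- **Boundary values of the general solution of the piece-wise continuous diffusion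
equation.** One has `lim_{x→1⁻} W_ℓ(x) = (15-2ℓ)/32`, and with
`C₁ = ∑_{ℓ=0}^{7} b_ℓ (15-2ℓ)/96`, `C₂ = 2C₁`, the general solution
`u(x,b) = ∑ (-2b_ℓ) W_ℓ(x) + 2C₁x + C₂` on `(-1,0)` and
`u(x,b) = ∑ (-b_ℓ) W_ℓ(x) + C₁x + C₂` on `[0,1)` satisfies
`u(x,b) → 0` as `x → -1⁺` and as `x → 1⁻`. -/
theorem piecewise_diffusion_general_solution_boundary (b : Fin 8 → ℝ) (C1 C2 : ℝ)
    (hC1 : C1 = ∑ l : Fin 8, b l * (15 - 2 * ((l : ℕ) : ℝ)) / 96) (hC2 : C2 = 2 * C1)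
    (u : ℝ → ℝ)
    (hu : ∀ x : ℝ, u x =
      if x < 0 then (∑ l : Fin 8, -2 * b l * Wfun (l : ℕ) x) + 2 * C1 * x + C2
      else (∑ l : Fin 8, -b l * Wfun (l : ℕ) x) + C1 * x + C2) :
    (∀ l : ℕ, l ≤ 7 →
      Tendsto (Wfun l) (𝓝[<] (1 : ℝ)) (𝓝 ((15 - 2 * (l : ℝ)) / 32))) ∧
    Tendsto u (𝓝[>] (-1 : ℝ)) (𝓝 0) ∧
    Tendsto u (𝓝[<] (1 : ℝ)) (𝓝 0) := by
  refine ⟨tendsto_W_one, ?_, ?_⟩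
  · have heq : ∀ᶠ x in 𝓝[>] (-1:ℝ),
        ((∑ l : Fin 8, -2 * b l * Wfun (l : ℕ) x) + 2 * C1 * x + C2) = u x := by
      filter_upwards [Ioo_mem_nhdsGT_of_mem (by norm_num : (-1:ℝ) ∈ Ico (-1:ℝ) 0)] with x hx
      rw [hu x, if_pos hx.2]
    refine Tendsto.congr' heq ?_
    have hsum : Tendsto (fun x => ∑ l : Fin 8, -2 * b l * Wfun (l : ℕ) x)
        (𝓝[>] (-1:ℝ)) (𝓝 (∑ l : Fin 8, -2 * b l * 0)) :=
      tendsto_finset_sum _ fun l _ => tendsto_const_nhds.mul (tendsto_W_negone l)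
    have hlin : Tendsto (fun x : ℝ => 2 * C1 * x + C2) (𝓝[>] (-1:ℝ))
        (𝓝 (2 * C1 * (-1) + C2)) :=
      (((continuous_const.mul continuous_id).add continuous_const).tendsto
        (-1:ℝ)).mono_left nhdsWithin_le_nhds
    have htot := hsum.add hlin
    have hval : (∑ l : Fin 8, -2 * b l * 0) + (2 * C1 * (-1) + C2) = 0 := by
      rw [hC2]; simp
    rw [hval] at htot
    exact htot.congr fun x => by ring
  · have heq : ∀ᶠ x in 𝓝[<] (1:ℝ),
        ((∑ l : Fin 8, -b l * Wfun (l : ℕ) x) + C1 * x + C2) = u x := by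
      filter_upwards [Ioo_mem_nhdsLT_of_mem (by norm_num : (1:ℝ) ∈ Ioc (0:ℝ) 1)] with x hx
      rw [hu x, if_neg (not_lt.mpr hx.1.le)]
    refine Tendsto.congr' heq ?_
    have hsum : Tendsto (fun x => ∑ l : Fin 8, -b l * Wfun (l : ℕ) x)
        (𝓝[<] (1:ℝ)) (𝓝 (∑ l : Fin 8, -b l * ((15 - 2 * ((l:ℕ) : ℝ)) / 32))) :=
      tendsto_finset_sum _ fun l _ =>
        tendsto_const_nhds.mul (tendsto_W_one (l:ℕ) (by omega))
    have hlin : Tendsto (fun x : ℝ => C1 * x + C2) (𝓝[<] (1:ℝ))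
        (𝓝 (C1 * 1 + C2)) :=
      (((continuous_const.mul continuous_id).add continuous_const).tendsto
        (1:ℝ)).mono_left nhdsWithin_le_nhds
    have htot := hsum.add hlin
    have hval : (∑ l : Fin 8, -b l * ((15 - 2 * ((l:ℕ) : ℝ)) / 32)) + (C1 * 1 + C2) = 0 := by
      rw [hC2, hC1]
      norm_num [Fin.sum_univ_eight]
      ring
    rw [hval] at htot
    exact htot.congr fun x => by ring
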